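/- Let V' and V'' be copies of ℂ² with bases e'₁, e'₂ and e''₁, e''₂. Let D₋ be the derivation of V'^{⊗b'} ⊗ V''^{⊗b''} acting on generators by D₋(e'₁) = 0, D₋(e'₂) = e'₁, D₋(e''₁) = e''₂, D₋(e''₂) = 0, and D₊ the derivation with D₊(e'₁) = e'₂, D₊(e'₂) = 0, D₊(e''₁) = 0, D₊(e''₂) = e''₁. For 1 ≤ i ≤ b' and 1 ≤ j ≤ b'', let A_{ij} : V'^{⊗(b'−1)} ⊗ V''^{⊗(b''−1)} → V'^{⊗b'} ⊗ V''^{⊗b''} insert the tensor e'₁⊗e''₁ − e'₂⊗e''₂ at the i-th spot of the first factor and the j-th spot of the second. Then D₊(D₋((e'₁)^{⊗b'} ⊗ (e''₁)^{⊗b''})) = (b'+1)·b''·(e'₁)^{⊗b'} ⊗ (e''₁)^{⊗b''} − Σ_{i=1}^{b'} Σ_{j=1}^{b''} A_{ij}((e'₁)^{⊗(b'−1)} ⊗ (e''₁)^{⊗(b''−1)}). -/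

import Mathlib

open scoped TensorProduct

/-- The basis vectors `e₁, e₂` of `ℂ²` (0-indexed). -/
noncomputable def eV2 (s : Fin 2) : Fin 2 → ℂ := Pi.single s 1

/-- `D₋` on `V' = ℂ²`: `e'₁ ↦ 0`, `e'₂ ↦ e'₁`. -/
noncomputable def dMinus' : (Fin 2 → ℂ) →ₗ[ℂ] (Fin 2 → ℂ) := Matrix.toLin' !![0, 1; 0, 0]

/-- `D₋` on `V'' = ℂ²`: `e''₁ ↦ e''₂`, `e''₂ ↦ 0`. -/
noncomputable def dMinus'' : (Fin 2 → ℂ) →ₗ[ℂ] (Fin 2 → ℂ) := Matrix.toLin' !![0, 0; 1, 0]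

/-- `D₊` on `V' = ℂ²`: `e'₁ ↦ e'₂`, `e'₂ ↦ 0`. -/
noncomputable def dPlus' : (Fin 2 → ℂ) →ₗ[ℂ] (Fin 2 → ℂ) := Matrix.toLin' !![0, 0; 1, 0]

/-- `D₊` on `V'' = ℂ²`: `e''₁ ↦ 0`, `e''₂ ↦ e''₁`. -/
noncomputable def dPlus'' : (Fin 2 → ℂ) →ₗ[ℂ] (Fin 2 → ℂ) := Matrix.toLin' !![0, 1; 0, 0]

/-- The Leibniz extension of an endomorphism `d` of `ℂ²` to `(ℂ²)^{⊗n}`. -/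
noncomputable def derivExt2 (n : ℕ) (d : (Fin 2 → ℂ) →ₗ[ℂ] (Fin 2 → ℂ)) :
    (⨂[ℂ] _ : Fin n, (Fin 2 → ℂ)) →ₗ[ℂ] ⨂[ℂ] _ : Fin n, (Fin 2 → ℂ) :=
  ∑ j : Fin n,
    PiTensorProduct.map
      (Function.update (fun _ : Fin n => (LinearMap.id : (Fin 2 → ℂ) →ₗ[ℂ] Fin 2 → ℂ)) j d)

/-- The derivation of `V'^{⊗b'} ⊗ V''^{⊗b''}` determined by endomorphisms `d'` of `V'` and
`d''` of `V''` (Leibniz rule across all tensor factors of both groups). -/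
noncomputable def derivTot (b' b'' : ℕ)
    (d' d'' : (Fin 2 → ℂ) →ₗ[ℂ] (Fin 2 → ℂ)) :
    ((⨂[ℂ] _ : Fin b', (Fin 2 → ℂ)) ⊗[ℂ] (⨂[ℂ] _ : Fin b'', (Fin 2 → ℂ))) →ₗ[ℂ]
      (⨂[ℂ] _ : Fin b', (Fin 2 → ℂ)) ⊗[ℂ] (⨂[ℂ] _ : Fin b'', (Fin 2 → ℂ)) :=
  TensorProduct.map (derivExt2 b' d') LinearMap.id +
    TensorProduct.map LinearMap.id (derivExt2 b'' d'')

/-- The value `A_{ij}((e'₁)^{⊗(b'−1)} ⊗ (e''₁)^{⊗(b''−1)})`: the tensor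
`e'₁⊗e''₁ − e'₂⊗e''₂` inserted at the (1-indexed) `i`-th spot of the first factor and the
`j`-th spot of the second, with `e'₁` (resp. `e''₁`) in all other slots. -/
noncomputable def insertThetaU (b' b'' : ℕ) (i j : ℕ) :
    (⨂[ℂ] _ : Fin b', (Fin 2 → ℂ)) ⊗[ℂ] (⨂[ℂ] _ : Fin b'', (Fin 2 → ℂ)) :=
  ((⨂ₜ[ℂ] k : Fin b', if (k : ℕ) = i - 1 then eV2 0 else eV2 0) ⊗ₜ[ℂ]
      (⨂ₜ[ℂ] k : Fin b'', if (k : ℕ) = j - 1 then eV2 0 else eV2 0)) -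
    ((⨂ₜ[ℂ] k : Fin b', if (k : ℕ) = i - 1 then eV2 1 else eV2 0) ⊗ₜ[ℂ]
      (⨂ₜ[ℂ] k : Fin b'', if (k : ℕ) = j - 1 then eV2 1 else eV2 0))

/- aux -/
lemma dMinus'_e0 : dMinus' (eV2 0) = 0 := by
  funext i; fin_cases i <;> simp [dMinus', eV2, Matrix.mulVec_single]

lemma dPlus'_e0 : dPlus' (eV2 0) = eV2 1 := by
  funext i; fin_cases i <;> simp [dPlus', eV2, Matrix.mulVec_single, Pi.single]
  · rfl

lemma dMinus''_e0 : dMinus'' (eV2 0) = eV2 1 := by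
  funext i; fin_cases i <;> simp [dMinus'', eV2, Matrix.mulVec_single, Pi.single]
  · rfl

lemma dPlus''_e0 : dPlus'' (eV2 0) = 0 := by
  funext i; fin_cases i <;> simp [dPlus'', eV2, Matrix.mulVec_single]

lemma dPlus''_e1 : dPlus'' (eV2 1) = eV2 0 := by
  funext i; fin_cases i <;> simp [dPlus'', eV2, Matrix.mulVec_single, Pi.single]
  · rfl

lemma derivExt2_tprod (n : ℕ) (d : (Fin 2 → ℂ) →ₗ[ℂ] (Fin 2 → ℂ)) (x : Fin n → (Fin 2 → ℂ)) :
    derivExt2 n d (PiTensorProduct.tprod ℂ x) =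
    ∑ j : Fin n, PiTensorProduct.tprod ℂ (Function.update x j (d (x j))) := by
  rw [derivExt2, LinearMap.sum_apply]
  refine Finset.sum_congr rfl fun j _ => ?_
  rw [PiTensorProduct.map_tprod]
  congr 1
  funext k
  rcases eq_or_ne k j with rfl | h
  · simp
  · simp [Function.update_of_ne h]

/-- `w n m` : `e₂` in slot `m`, `e₁` elsewhere. -/
noncomputable def wT (n : ℕ) (m : ℕ) : ⨂[ℂ] _ : Fin n, (Fin 2 → ℂ) :=
  PiTensorProduct.tprod ℂ (fun k : Fin n => if (k : ℕ) = m then eV2 1 else eV2 0)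

lemma update_eq_w (n : ℕ) (i : Fin n) :
    (PiTensorProduct.tprod ℂ (Function.update (fun _ : Fin n => eV2 0) i (eV2 1))) = wT n i := by
  rw [wT]; congr 1; funext k
  rw [Function.update_apply]
  simp [Fin.ext_iff]

lemma derivExt2_dMinus'_base (n : ℕ) :
    derivExt2 n dMinus' (PiTensorProduct.tprod ℂ (fun _ : Fin n => eV2 0)) = 0 := by
  rw [derivExt2_tprod]
  refine Finset.sum_eq_zero fun j _ => ?_
  rw [dMinus'_e0]
  exact MultilinearMap.map_update_zero _ _ _

lemma derivExt2_dMinus''_base (n : ℕ) :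
    derivExt2 n dMinus'' (PiTensorProduct.tprod ℂ (fun _ : Fin n => eV2 0)) =
      ∑ j : Fin n, wT n j := by
  rw [derivExt2_tprod]
  refine Finset.sum_congr rfl fun j _ => ?_
  rw [dMinus''_e0, update_eq_w]

lemma derivExt2_dPlus'_base (n : ℕ) :
    derivExt2 n dPlus' (PiTensorProduct.tprod ℂ (fun _ : Fin n => eV2 0)) =
      ∑ j : Fin n, wT n j := by
  rw [derivExt2_tprod]
  refine Finset.sum_congr rfl fun j _ => ?_
  rw [dPlus'_e0, update_eq_w]

lemma derivExt2_dPlus''_w (n m : ℕ) (hm : m < n) :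
    derivExt2 n dPlus'' (wT n m) = PiTensorProduct.tprod ℂ (fun _ : Fin n => eV2 0) := by
  rw [wT, derivExt2_tprod]
  rw [Finset.sum_eq_single (⟨m, hm⟩ : Fin n)]
  · have h1 : (if ((⟨m, hm⟩ : Fin n) : ℕ) = m then eV2 1 else eV2 0) = eV2 1 := by simp
    rw [h1, dPlus''_e1]
    congr 1
    funext k
    rw [Function.update_apply]
    split_ifs with h h2
    · rfl
    · exact absurd (by simpa [Fin.ext_iff] using h2) (by simp [Fin.ext_iff] at h; simp [h])
    · rfl
  · intro b _ hb
    have hbm : (b : ℕ) ≠ m := by simpa [Fin.ext_iff] using hb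
    have : (if (b : ℕ) = m then eV2 1 else eV2 0) = eV2 0 := by simp [hbm]
    rw [this, dPlus''_e0]
    exact MultilinearMap.map_update_zero _ _ _
  · intro h; exact absurd (Finset.mem_univ _) h

lemma derivTot_minus_base (b' b'' : ℕ) :
    derivTot b' b'' dMinus' dMinus''
      ((PiTensorProduct.tprod ℂ (fun _ : Fin b' => eV2 0)) ⊗ₜ[ℂ]
        PiTensorProduct.tprod ℂ (fun _ : Fin b'' => eV2 0)) =
    ∑ j : Fin b'', (PiTensorProduct.tprod ℂ (fun _ : Fin b' => eV2 0)) ⊗ₜ[ℂ] wT b'' j := by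
  rw [derivTot, LinearMap.add_apply, TensorProduct.map_tmul, TensorProduct.map_tmul,
    derivExt2_dMinus'_base, derivExt2_dMinus''_base]
  simp [TensorProduct.tmul_sum]

lemma derivTot_plus_w (b' b'' : ℕ) (j : Fin b'') :
    derivTot b' b'' dPlus' dPlus''
      ((PiTensorProduct.tprod ℂ (fun _ : Fin b' => eV2 0)) ⊗ₜ[ℂ] wT b'' (j : ℕ)) =
    (∑ i : Fin b', wT b' (i : ℕ) ⊗ₜ[ℂ] wT b'' (j : ℕ)) +
      (PiTensorProduct.tprod ℂ (fun _ : Fin b' => eV2 0)) ⊗ₜ[ℂ]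
        PiTensorProduct.tprod ℂ (fun _ : Fin b'' => eV2 0) := by
  rw [derivTot, LinearMap.add_apply, TensorProduct.map_tmul, TensorProduct.map_tmul,
    derivExt2_dPlus'_base, derivExt2_dPlus''_w b'' j j.isLt]
  simp [TensorProduct.sum_tmul]

lemma sum_Icc_pred {M : Type*} [AddCommMonoid M] (n : ℕ) (f : ℕ → M) :
    ∑ i ∈ Finset.Icc 1 n, f (i - 1) = ∑ i : Fin n, f (i : ℕ) := by
  rw [← Finset.Ico_add_one_right_eq_Icc, Finset.sum_Ico_eq_sum_range]
  simp [Fin.sum_univ_eq_sum_range]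

lemma insertThetaU_eq (b' b'' i j : ℕ) :
    insertThetaU b' b'' i j =
      ((PiTensorProduct.tprod ℂ (fun _ : Fin b' => eV2 0)) ⊗ₜ[ℂ]
        PiTensorProduct.tprod ℂ (fun _ : Fin b'' => eV2 0)) -
      wT b' (i - 1) ⊗ₜ[ℂ] wT b'' (j - 1) := by
  simp [insertThetaU, wT]

lemma my_sum_sub {ι M : Type*} [AddCommGroup M] (s : Finset ι) (A : M) (g : ι → M) :
    ∑ i ∈ s, (A - g i) = s.card • A - ∑ i ∈ s, g i := by
  classical
  induction s using Finset.induction_on with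
  | empty => simp
  | insert a s h ih => rw [Finset.sum_insert h, Finset.sum_insert h, ih,
      Finset.card_insert_of_notMem h, succ_nsmul]; abel


/-- `D₊(D₋((e'₁)^{⊗b'} ⊗ (e''₁)^{⊗b''})) =
(b'+1)·b''·(e'₁)^{⊗b'} ⊗ (e''₁)^{⊗b''} − Σ_{i=1}^{b'} Σ_{j=1}^{b''} A_{ij}(...)`. -/
theorem derivTot_plus_minus_pow (b' b'' : ℕ) :
    derivTot b' b'' dPlus' dPlus''
        (derivTot b' b'' dMinus' dMinus''
          ((⨂ₜ[ℂ] _ : Fin b', eV2 0) ⊗ₜ[ℂ] (⨂ₜ[ℂ] _ : Fin b'', eV2 0))) =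
      (((b' + 1) * b'' : ℕ) : ℂ) • ((⨂ₜ[ℂ] _ : Fin b', eV2 0) ⊗ₜ[ℂ] (⨂ₜ[ℂ] _ : Fin b'', eV2 0)) -
        ∑ i ∈ Finset.Icc 1 b', ∑ j ∈ Finset.Icc 1 b'', insertThetaU b' b'' i j := by
  rw [derivTot_minus_base, map_sum]
  simp_rw [derivTot_plus_w, insertThetaU_eq]
  rw [Finset.sum_add_distrib, Finset.sum_const, Finset.card_univ, Fintype.card_fin]
  have hin : ∀ x ∈ Finset.Icc 1 b', (∑ y ∈ Finset.Icc 1 b'',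
      ((((PiTensorProduct.tprod ℂ) fun _ : Fin b' => eV2 0) ⊗ₜ[ℂ]
          (PiTensorProduct.tprod ℂ) fun _ : Fin b'' => eV2 0) -
        wT b' (x - 1) ⊗ₜ[ℂ] wT b'' (y - 1))) =
      b'' • ((((PiTensorProduct.tprod ℂ) fun _ : Fin b' => eV2 0) ⊗ₜ[ℂ]
          (PiTensorProduct.tprod ℂ) fun _ : Fin b'' => eV2 0)) -
        ∑ y ∈ Finset.Icc 1 b'', wT b' (x - 1) ⊗ₜ[ℂ] wT b'' (y - 1) := fun x _ => by
    rw [my_sum_sub (g := fun y => wT b' (x - 1) ⊗ₜ[ℂ] wT b'' (y - 1)), Nat.card_Icc, Nat.add_sub_cancel]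
  rw [Finset.sum_congr rfl hin, my_sum_sub (g := fun x => ∑ y ∈ Finset.Icc 1 b'', wT b' (x - 1) ⊗ₜ[ℂ] wT b'' (y - 1)), Nat.card_Icc, Nat.add_sub_cancel]
  rw [sum_Icc_pred b' (fun m => ∑ y ∈ Finset.Icc 1 b'', wT b' m ⊗ₜ[ℂ] wT b'' (y - 1))]
  have hin2 : ∀ i : Fin b', (∑ y ∈ Finset.Icc 1 b'', wT b' (i : ℕ) ⊗ₜ[ℂ] wT b'' (y - 1)) =
      ∑ y : Fin b'', wT b' (i : ℕ) ⊗ₜ[ℂ] wT b'' (y : ℕ) := fun i =>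
    sum_Icc_pred b'' (fun m => wT b' (i : ℕ) ⊗ₜ[ℂ] wT b'' m)
  rw [Finset.sum_congr rfl (fun i _ => hin2 i), Finset.sum_comm,
    Nat.cast_smul_eq_nsmul, add_mul, one_mul, add_smul, mul_nsmul, smul_comm b'' b']
  abel
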